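/- The dual X* of a Banach space X is acs if and only if every two-dimensional quotient X/U (U a closed subspace with dim X/U = 2) is acs. -/

import Mathlib

open Filter Topology

/-- A real Banach space is acs if whenever y, z are unit vectors with ‖y+z‖ = 2 and y* is a
norm-one functional with y*(y) = 1, then y*(z) = 1. -/
def IsAcs (Y : Type*) [NormedAddCommGroup Y] [NormedSpace ℝ Y] : Prop :=
  ∀ y z : Y, ‖y‖ = 1 → ‖z‖ = 1 → ‖y + z‖ = 2 →
    ∀ f : StrongDual ℝ Y, ‖f‖ = 1 → f y = 1 → f z = 1

section AcsAux

open NormedSpace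

variable {X : Type*} [NormedAddCommGroup X] [NormedSpace ℝ X]

/-- The quotient map as a continuous linear map. -/
noncomputable def acsQuotMk (U : Submodule ℝ X) [IsClosed (U : Set X)] : X →L[ℝ] X ⧸ U :=
  LinearMap.mkContinuous U.mkQ 1 fun x => by
    simpa using Submodule.Quotient.norm_mk_le U x

@[simp] lemma acsQuotMk_apply (U : Submodule ℝ X) [IsClosed (U : Set X)] (x : X) :
    acsQuotMk U x = Submodule.Quotient.mk x := rfl

theorem acs_norm_comp (U : Submodule ℝ X) [IsClosed (U : Set X)] (h : StrongDual ℝ (X ⧸ U)) :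
    ‖h.comp (acsQuotMk U)‖ = ‖h‖ := by
  refine le_antisymm ?_ ?_
  · refine ContinuousLinearMap.opNorm_le_bound _ (norm_nonneg h) fun x => ?_
    calc ‖h (acsQuotMk U x)‖ ≤ ‖h‖ * ‖acsQuotMk U x‖ := h.le_opNorm _
      _ ≤ ‖h‖ * ‖x‖ := by
        have : ‖acsQuotMk U x‖ ≤ ‖x‖ := Submodule.Quotient.norm_mk_le U x
        exact mul_le_mul_of_nonneg_left this (norm_nonneg h)
  · refine ContinuousLinearMap.opNorm_le_bound _ (norm_nonneg _) fun y => ?_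
    refine le_of_forall_pos_le_add fun ε hε => ?_
    set C := ‖h.comp (acsQuotMk U)‖ with hCdef
    have hC : 0 ≤ C := norm_nonneg _
    have hε' : 0 < ε / (C + 1) := by positivity
    obtain ⟨m, hm, hmlt⟩ := Submodule.Quotient.norm_mk_lt y hε'
    have hy : h y = (h.comp (acsQuotMk U)) m := by
      simp [hm]
    calc ‖h y‖ = ‖(h.comp (acsQuotMk U)) m‖ := by rw [hy]
      _ ≤ C * ‖m‖ := (h.comp (acsQuotMk U)).le_opNorm m
      _ ≤ C * (‖y‖ + ε / (C + 1)) := mul_le_mul_of_nonneg_left hmlt.le hC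
      _ ≤ C * ‖y‖ + ε := by
        have h1 : C * (ε / (C + 1)) ≤ ε := by
          rw [mul_div_assoc']
          rw [div_le_iff₀ (by linarith)]
          nlinarith [hε.le]
        nlinarith

/-- Composition with the quotient map, as a linear isometry from the dual of the quotient
into the dual of the space. -/
noncomputable def acsDualLift (U : Submodule ℝ X) [IsClosed (U : Set X)] :
    StrongDual ℝ (X ⧸ U) →ₗᵢ[ℝ] StrongDual ℝ X where
  toLinearMap :=
    { toFun := fun h => h.comp (acsQuotMk U)
      map_add' := fun a b => by ext x; simp
      map_smul' := fun c a => by ext x; simp }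
  norm_map' := acs_norm_comp U

@[simp] lemma acsDualLift_apply (U : Submodule ℝ X) [IsClosed (U : Set X)]
    (h : StrongDual ℝ (X ⧸ U)) (x : X) :
    acsDualLift U h x = h (Submodule.Quotient.mk x) := rfl

theorem acs_exists_smul_of_ker_le {f g : X →L[ℝ] ℝ}
    (h : LinearMap.ker (f : X →ₗ[ℝ] ℝ) ≤ LinearMap.ker (g : X →ₗ[ℝ] ℝ)) : ∃ c : ℝ, g = c • f := by
  have h' : ⨅ _ : Unit, LinearMap.ker (f : X →ₗ[ℝ] ℝ) ≤ LinearMap.ker (g : X →ₗ[ℝ] ℝ) := by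
    simpa using h
  have hmem := mem_span_of_iInf_ker_le_ker (L := fun _ : Unit => (f : X →ₗ[ℝ] ℝ))
    (K := (g : X →ₗ[ℝ] ℝ)) h'
  rw [Set.range_const, Submodule.mem_span_singleton] at hmem
  obtain ⟨c, hc⟩ := hmem
  refine ⟨c, ?_⟩
  ext x
  have := congrArg (fun φ : X →ₗ[ℝ] ℝ => φ x) hc
  simpa using this.symm

theorem acs_exists_max {Y : Type*} [NormedAddCommGroup Y] [NormedSpace ℝ Y]
    [FiniteDimensional ℝ Y] (S : StrongDual ℝ Y) (hS : S ≠ 0) :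
    ∃ z : Y, ‖z‖ = 1 ∧ S z = ‖S‖ := by
  have hx0 : ∃ x : Y, S x ≠ 0 := by
    by_contra hcon
    push_neg at hcon
    exact hS (by ext x; simpa using hcon x)
  obtain ⟨x0, hx0⟩ := hx0
  haveI : Nontrivial Y := ⟨x0, 0, fun h => hx0 (by simp [h])⟩
  have hne : (Metric.sphere (0 : Y) 1).Nonempty := NormedSpace.sphere_nonempty.mpr zero_le_one
  obtain ⟨z, hzs, hmax'⟩ := (isCompact_sphere (0 : Y) 1).exists_isMaxOn hne
    S.continuous.continuousOn
  have hmax : ∀ w ∈ Metric.sphere (0 : Y) 1, S w ≤ S z := fun w hw => hmax' hw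
  have hz1 : ‖z‖ = 1 := by simpa using hzs
  refine ⟨z, hz1, le_antisymm ?_ ?_⟩
  · calc S z ≤ |S z| := le_abs_self _
      _ = ‖S z‖ := rfl
      _ ≤ ‖S‖ * ‖z‖ := S.le_opNorm z
      _ = ‖S‖ := by rw [hz1, mul_one]
  · refine ContinuousLinearMap.opNorm_le_bound _ ?_ fun x => ?_
    · have : S (-z) ≤ S z := hmax (-z) (by simpa using hz1)
      simp only [map_neg] at this
      linarith
    · rcases eq_or_ne x 0 with rfl | hx
      · simp
      · have hnx : (0 : ℝ) < ‖x‖ := norm_pos_iff.mpr hx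
        set u : Y := ‖x‖⁻¹ • x with hu
        have hus : u ∈ Metric.sphere (0 : Y) 1 := by
          simp [hu, norm_smul, abs_of_pos (inv_pos.mpr hnx), inv_mul_cancel₀ hnx.ne']
        have h1 : S u ≤ S z := hmax u hus
        have h2 : -S u ≤ S z := by
          have := hmax (-u) (by simpa using hus)
          simpa using this
        have habs : |S u| ≤ S z := abs_le.mpr ⟨by linarith, h1⟩
        have hSx : S x = ‖x‖ * S u := by
          rw [hu, map_smul]
          rw [smul_eq_mul, ← mul_assoc, mul_inv_cancel₀ hnx.ne', one_mul]
        rw [hSx]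
        calc ‖‖x‖ * S u‖ = ‖x‖ * |S u| := by
              rw [Real.norm_eq_abs, abs_mul, abs_of_pos hnx]
          _ ≤ ‖x‖ * S z := mul_le_mul_of_nonneg_left habs hnx.le
          _ = S z * ‖x‖ := mul_comm _ _

theorem acs_finrank_dual (Y : Type*) [NormedAddCommGroup Y] [NormedSpace ℝ Y]
    [FiniteDimensional ℝ Y] : Module.finrank ℝ (StrongDual ℝ Y) = Module.finrank ℝ Y := by
  have e : Module.Dual ℝ Y ≃ₗ[ℝ] StrongDual ℝ Y := LinearMap.toContinuousLinearMap
  rw [← e.finrank_eq, Subspace.dual_finrank_eq]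

theorem isAcs_dual_of_isAcs {Y : Type*} [NormedAddCommGroup Y] [NormedSpace ℝ Y]
    [FiniteDimensional ℝ Y] (h : IsAcs Y) : IsAcs (StrongDual ℝ Y) := by
  intro F G hF hG hFG Ψ hΨ hΨF
  have hsurj : Function.Surjective (inclusionInDoubleDualLi ℝ (E := Y)) := by
    have hdim : Module.finrank ℝ Y = Module.finrank ℝ (StrongDual ℝ (StrongDual ℝ Y)) := by
      rw [acs_finrank_dual, acs_finrank_dual]
    exact (LinearMap.injective_iff_surjective_of_finrank_eq_finrank
      (f := (inclusionInDoubleDualLi ℝ (E := Y)).toLinearMap) hdim).mp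
      (inclusionInDoubleDualLi ℝ (E := Y)).injective
  obtain ⟨y, hy⟩ := hsurj Ψ
  have hyn : ‖y‖ = 1 := by
    rw [← (inclusionInDoubleDualLi ℝ (E := Y)).norm_map y, hy, hΨ]
  have hFy : F y = 1 := by rw [← hΨF, ← hy]; rfl
  have hne : F + G ≠ 0 := by
    intro h0
    rw [h0, norm_zero] at hFG
    norm_num at hFG
  obtain ⟨z, hz1, hzv⟩ := acs_exists_max (F + G) hne
  rw [hFG] at hzv
  have hFzle : F z ≤ 1 := by
    calc F z ≤ |F z| := le_abs_self _
      _ = ‖F z‖ := rfl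
      _ ≤ ‖F‖ * ‖z‖ := F.le_opNorm z
      _ = 1 := by rw [hF, hz1, mul_one]
  have hGzle : G z ≤ 1 := by
    calc G z ≤ |G z| := le_abs_self _
      _ = ‖G z‖ := rfl
      _ ≤ ‖G‖ * ‖z‖ := G.le_opNorm z
      _ = 1 := by rw [hG, hz1, mul_one]
  have hsum : F z + G z = 2 := by simpa using hzv
  have hFz : F z = 1 := by linarith
  have hGz : G z = 1 := by linarith
  have hzy : ‖z + y‖ = 2 := by
    refine le_antisymm ?_ ?_
    · calc ‖z + y‖ ≤ ‖z‖ + ‖y‖ := norm_add_le _ _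
        _ = 2 := by rw [hz1, hyn]; norm_num
    · have : F (z + y) ≤ ‖F‖ * ‖z + y‖ := by
        calc F (z + y) ≤ |F (z + y)| := le_abs_self _
          _ = ‖F (z + y)‖ := rfl
          _ ≤ ‖F‖ * ‖z + y‖ := F.le_opNorm _
      rw [map_add, hFz, hFy, hF, one_mul] at this
      linarith
  have hGy : G y = 1 := h z y hz1 hyn hzy G hG hGz
  rw [← hy]
  exact hGy

theorem acs_forward {U : Submodule ℝ X} [IsClosed (U : Set X)]
    (hacs : IsAcs (StrongDual ℝ X)) : IsAcs (X ⧸ U) := by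
  intro y z hy hz hyz f hf hfy
  have hyz0 : y + z ≠ 0 := by
    intro h0
    rw [h0, norm_zero] at hyz
    norm_num at hyz
  obtain ⟨g, hg1, hgyz⟩ := exists_dual_vector ℝ (y + z) (norm_ne_zero_iff.mpr hyz0)
  have hgyz2 : g y + g z = 2 := by
    have : g (y + z) = (2 : ℝ) := by rw [hgyz, hyz]; norm_num
    simpa [map_add] using this
  have hgyle : g y ≤ 1 := by
    calc g y ≤ |g y| := le_abs_self _
      _ = ‖g y‖ := rfl
      _ ≤ ‖g‖ * ‖y‖ := g.le_opNorm y
      _ = 1 := by rw [hg1, hy, mul_one]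
  have hgzle : g z ≤ 1 := by
    calc g z ≤ |g z| := le_abs_self _
      _ = ‖g z‖ := rfl
      _ ≤ ‖g‖ * ‖z‖ := g.le_opNorm z
      _ = 1 := by rw [hg1, hz, mul_one]
  have hgy : g y = 1 := by linarith
  have hgz : g z = 1 := by linarith
  letI : SeminormedAddCommGroup (StrongDual ℝ (X ⧸ U)) := inferInstance
  letI : NormedSpace ℝ (StrongDual ℝ (X ⧸ U)) := inferInstance
  set T := acsDualLift U with hT
  set p : Submodule ℝ (StrongDual ℝ X) := LinearMap.range T.toLinearMap with hp
  letI : SeminormedAddCommGroup p := inferInstance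
  letI : NormedSpace ℝ p := inferInstance
  set e := LinearIsometry.equivRange (F := StrongDual ℝ (X ⧸ U)) (E := StrongDual ℝ X) T with he
  set j := inclusionInDoubleDual ℝ (X ⧸ U) z with hj
  set ψ0 : p →L[ℝ] ℝ := j.comp e.symm.toLinearIsometry.toContinuousLinearMap with hψ0def
  have hψ0 : ‖ψ0‖ = 1 := by
    have hψx : ∀ x : p, ψ0 x = (e.symm x) z := fun x => rfl
    refine le_antisymm (ContinuousLinearMap.opNorm_le_bound _ zero_le_one fun x => ?_) ?_
    · rw [hψx, one_mul]
      calc ‖(e.symm x) z‖ ≤ ‖e.symm x‖ * ‖z‖ := (e.symm x).le_opNorm z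
        _ = ‖x‖ := by rw [LinearIsometryEquiv.norm_map, hz, mul_one]
    · have h1 : ψ0 (e g) = 1 := by rw [hψx, e.symm_apply_apply, hgz]
      calc (1 : ℝ) = ψ0 (e g) := h1.symm
        _ ≤ |ψ0 (e g)| := le_abs_self _
        _ = ‖ψ0 (e g)‖ := rfl
        _ ≤ ‖ψ0‖ * ‖e g‖ := ψ0.le_opNorm _
        _ = ‖ψ0‖ := by rw [LinearIsometryEquiv.norm_map, hg1, mul_one]
  obtain ⟨Ψ, hΨext, hΨnorm⟩ := exists_extension_norm_eq p ψ0
  have hesymm : ∀ (h : StrongDual ℝ (X ⧸ U)) (hm : T h ∈ p), e.symm ⟨T h, hm⟩ = h := by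
    intro h hm
    have : e h = ⟨T h, hm⟩ := Subtype.ext (by simp [he])
    rw [← this, e.symm_apply_apply]
  have hΨval : ∀ h : StrongDual ℝ (X ⧸ U), Ψ (T h) = h z := by
    intro h
    have hm : T h ∈ p := ⟨h, rfl⟩
    have hext := hΨext ⟨T h, hm⟩
    rw [show ((⟨T h, hm⟩ : p) : StrongDual ℝ X) = T h from rfl] at hext
    rw [hext, hψ0def]
    show j (e.symm ⟨T h, hm⟩) = h z
    rw [hesymm h hm]
    rfl
  have hTg : ‖T g‖ = 1 := by rw [T.norm_map, hg1]
  have hTf : ‖T f‖ = 1 := by rw [T.norm_map, hf]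
  have hgf2 : ‖g + f‖ = 2 := by
    refine le_antisymm ?_ ?_
    · calc ‖g + f‖ ≤ ‖g‖ + ‖f‖ := norm_add_le _ _
        _ = 2 := by rw [hg1, hf]; norm_num
    · have h1 : (g + f) y ≤ ‖g + f‖ * ‖y‖ := by
        calc (g + f) y ≤ |(g + f) y| := le_abs_self _
          _ = ‖(g + f) y‖ := rfl
          _ ≤ ‖g + f‖ * ‖y‖ := (g + f).le_opNorm y
      rw [hy, mul_one] at h1
      have h2 : (g + f) y = 2 := by
        simp only [ContinuousLinearMap.add_apply, hgy, hfy]; norm_num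
      linarith
  have hsum : ‖T g + T f‖ = 2 := by rw [← map_add, T.norm_map, hgf2]
  have hΨ1 : ‖Ψ‖ = 1 := by rw [hΨnorm, hψ0]
  have hΨTg : Ψ (T g) = 1 := by rw [hΨval g, hgz]
  have hfinal := hacs (T g) (T f) hTg hTf hsum Ψ hΨ1 hΨTg
  rwa [hΨval f] at hfinal

theorem acs_backward
    (hq : ∀ (U : Submodule ℝ X) [IsClosed (U : Set X)],
      Module.finrank ℝ (X ⧸ U) = 2 → IsAcs (X ⧸ U)) :
    IsAcs (StrongDual ℝ X) := by
  intro f g hf hg hfg Φ hΦ hΦf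
  by_cases hdep : ∃ c : ℝ, g = c • f
  · obtain ⟨c, rfl⟩ := hdep
    have hc : |c| = 1 := by
      have h1 : ‖c • f‖ = |c| * ‖f‖ := by rw [norm_smul, Real.norm_eq_abs]
      rw [hg, hf, mul_one] at h1
      exact h1.symm
    have hc1 : c = 1 := by
      rcases (abs_eq zero_le_one).mp hc with h1 | h1
      · exact h1
      · exfalso
        rw [h1, show (-1 : ℝ) • f = -f from neg_one_smul ℝ f, add_neg_cancel, norm_zero] at hfg
        norm_num at hfg
    rw [hc1, one_smul]
    exact hΦf
  · have hf0 : f ≠ 0 := by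
      intro h0
      rw [h0, norm_zero] at hf
      norm_num at hf
    have hk1 : ¬(LinearMap.ker (f : X →ₗ[ℝ] ℝ) ≤ LinearMap.ker (g : X →ₗ[ℝ] ℝ)) := fun hle =>
      hdep (acs_exists_smul_of_ker_le hle)
    have hk2 : ¬(LinearMap.ker (g : X →ₗ[ℝ] ℝ) ≤ LinearMap.ker (f : X →ₗ[ℝ] ℝ)) := by
      intro hle
      obtain ⟨c, hc⟩ := acs_exists_smul_of_ker_le hle
      have hc0 : c ≠ 0 := by
        intro h0
        rw [h0, zero_smul] at hc
        exact hf0 hc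
      exact hdep ⟨c⁻¹, by rw [hc, smul_smul, inv_mul_cancel₀ hc0, one_smul]⟩
    obtain ⟨x1, hx1f, hx1g⟩ : ∃ x, f x = 0 ∧ g x = 1 := by
      obtain ⟨x, hxf, hxg⟩ := SetLike.not_le_iff_exists.mp hk1
      have hfx : f x = 0 := LinearMap.mem_ker.mp hxf
      have hgx : g x ≠ 0 := fun h0 => hxg (LinearMap.mem_ker.mpr h0)
      exact ⟨(g x)⁻¹ • x, by simp [hfx], by simp [inv_mul_cancel₀ hgx]⟩
    obtain ⟨x2, hx2g, hx2f⟩ : ∃ x, g x = 0 ∧ f x = 1 := by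
      obtain ⟨x, hxg, hxf⟩ := SetLike.not_le_iff_exists.mp hk2
      have hgx : g x = 0 := LinearMap.mem_ker.mp hxg
      have hfx : f x ≠ 0 := fun h0 => hxf (LinearMap.mem_ker.mpr h0)
      exact ⟨(f x)⁻¹ • x, by simp [hgx], by simp [inv_mul_cancel₀ hfx]⟩
    set φ : X →ₗ[ℝ] ℝ × ℝ := LinearMap.prod (f : X →ₗ[ℝ] ℝ) (g : X →ₗ[ℝ] ℝ) with hφ
    have hsurj : Function.Surjective φ := by
      rintro ⟨a, b⟩
      refine ⟨a • x2 + b • x1, ?_⟩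
      simp [hφ, LinearMap.prod_apply, hx1f, hx1g, hx2f, hx2g]
    set U : Submodule ℝ X := LinearMap.ker φ with hU
    have hUclosed : IsClosed (U : Set X) := by
      have hset : (U : Set X) = (LinearMap.ker (f : X →ₗ[ℝ] ℝ) : Set X) ∩ (LinearMap.ker (g : X →ₗ[ℝ] ℝ) : Set X) := by
        rw [hU, LinearMap.ker_prod]
        rfl
      rw [hset]
      exact (ContinuousLinearMap.isClosed_ker f).inter (ContinuousLinearMap.isClosed_ker g)
    haveI := hUclosed
    have hrank : Module.finrank ℝ (X ⧸ U) = 2 := by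
      have e := φ.quotKerEquivOfSurjective hsurj
      rw [show U = LinearMap.ker φ from rfl, e.finrank_eq, Module.finrank_prod,
        Module.finrank_self]
    have hacsY := hq U hrank
    haveI : FiniteDimensional ℝ (X ⧸ U) := FiniteDimensional.of_finrank_eq_succ hrank
    have hUf : U ≤ LinearMap.ker (f : X →ₗ[ℝ] ℝ) := by
      rw [hU, LinearMap.ker_prod]
      exact inf_le_left
    have hUg : U ≤ LinearMap.ker (g : X →ₗ[ℝ] ℝ) := by
      rw [hU, LinearMap.ker_prod]
      exact inf_le_right
    set F : StrongDual ℝ (X ⧸ U) := LinearMap.toContinuousLinearMap (U.liftQ (f : X →ₗ[ℝ] ℝ) hUf)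
      with hFdef
    set G : StrongDual ℝ (X ⧸ U) := LinearMap.toContinuousLinearMap (U.liftQ (g : X →ₗ[ℝ] ℝ) hUg)
      with hGdef
    have hTF : acsDualLift U F = f := by
      ext x
      simp [hFdef, acsDualLift_apply, Submodule.liftQ_apply]
    have hTG : acsDualLift U G = g := by
      ext x
      simp [hGdef, acsDualLift_apply, Submodule.liftQ_apply]
    have hF1 : ‖F‖ = 1 := by rw [← (acsDualLift U).norm_map F, hTF, hf]
    have hG1 : ‖G‖ = 1 := by rw [← (acsDualLift U).norm_map G, hTG, hg]
    have hFG2 : ‖F + G‖ = 2 := by rw [← (acsDualLift U).norm_map, map_add, hTF, hTG, hfg]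
    set Ψ : StrongDual ℝ (StrongDual ℝ (X ⧸ U)) := Φ.comp (acsDualLift U).toContinuousLinearMap with hΨdef
    have hΨF : Ψ F = 1 := by
      have : Ψ F = Φ (acsDualLift U F) := rfl
      rw [this, hTF]
      exact hΦf
    letI : SeminormedAddCommGroup (StrongDual ℝ (X ⧸ U)) := inferInstance
    letI : NormedSpace ℝ (StrongDual ℝ (X ⧸ U)) := inferInstance
    have hΨn : ‖Ψ‖ = 1 := by
      refine le_antisymm ?_ ?_
      · refine ContinuousLinearMap.opNorm_le_bound _ zero_le_one fun h => ?_
        calc ‖Ψ h‖ = ‖Φ (acsDualLift U h)‖ := rfl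
          _ ≤ ‖Φ‖ * ‖acsDualLift U h‖ := Φ.le_opNorm _
          _ = 1 * ‖h‖ := by rw [hΦ, (acsDualLift U).norm_map]
      · have h1 : (1 : ℝ) = Ψ F := hΨF.symm
        have h2 : Ψ F ≤ ‖Ψ‖ := by
          calc Ψ F ≤ |Ψ F| := le_abs_self _
            _ = ‖Ψ F‖ := rfl
            _ ≤ ‖Ψ‖ * ‖F‖ := Ψ.le_opNorm F
            _ = ‖Ψ‖ := by rw [hF1, mul_one]
        exact h1.le.trans h2
    have hfin := isAcs_dual_of_isAcs hacsY F G hF1 hG1 hFG2 Ψ hΨn hΨF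
    have hΨG : Ψ G = Φ g := by
      have : Ψ G = Φ (acsDualLift U G) := rfl
      rw [this, hTG]
    rwa [hΨG] at hfin

end AcsAux

theorem dual_acs_iff_two_dim_quotients_acs (X : Type*) [NormedAddCommGroup X]
    [NormedSpace ℝ X] [CompleteSpace X] :
    IsAcs (StrongDual ℝ X) ↔
      ∀ (U : Submodule ℝ X) [IsClosed (U : Set X)],
        Module.finrank ℝ (X ⧸ U) = 2 → IsAcs (X ⧸ U) := by
  constructor
  · intro hacs U hUc _
    exact acs_forward hacs
  · exact acs_backward
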